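/- In a 3-regular simple graph, if two pairs of nonadjacent twin vertices intersect (share a common vertex), then the three twin vertices and their three common neighbors form a complete bipartite graph K_{3,3} which is an entire connected component of the graph. -/

import Mathlib

open SimpleGraph

/-- Two letters are interlaced in a word if their occurrences alternate. -/
def Interlaced {α : Type} [DecidableEq α] (W : List α) (a b : α) : Prop :=
  W.filter (fun x => x == a || x == b) = [a, b, a, b] ∨
  W.filter (fun x => x == a || x == b) = [b, a, b, a]

/-- The interlacement graph of a word. -/
def interlacementGraph {α : Type} [DecidableEq α] (W : List α) : SimpleGraph α where
  Adj a b := a ≠ b ∧ (Interlaced W a b ∨ Interlaced W b a)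
  symm := ⟨fun a b h => ⟨h.1.symm, h.2.symm⟩⟩
  loopless := ⟨fun a h => h.1 rfl⟩

/-- A double occurrence word: each letter of the alphabet occurs exactly twice. -/
def IsDOW {α : Type} [DecidableEq α] (W : List α) : Prop := ∀ a : α, W.count a = 2

/-- A circle graph: a graph isomorphic to the interlacement graph of a
double occurrence word. -/
def IsCircleGraph {V : Type} (G : SimpleGraph V) : Prop :=
  ∃ (n : ℕ) (W : List (Fin n)), IsDOW W ∧ Nonempty (G ≃g interlacementGraph W)

/-- Local complementation at a vertex `v`: toggle adjacency inside `N(v)`. -/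
def localComplement {V : Type} (G : SimpleGraph V) (v : V) : SimpleGraph V where
  Adj x y := x ≠ y ∧ ((G.Adj v x ∧ G.Adj v y ∧ ¬ G.Adj x y) ∨
    (¬ (G.Adj v x ∧ G.Adj v y) ∧ G.Adj x y))
  symm := by
    refine ⟨?_⟩
    rintro x y ⟨hxy, h | h⟩
    · exact ⟨hxy.symm, Or.inl ⟨h.2.1, h.1, fun hc => h.2.2 hc.symm⟩⟩
    · exact ⟨hxy.symm, Or.inr ⟨fun hc => h.1 ⟨hc.2, hc.1⟩, h.2.symm⟩⟩
  loopless := ⟨fun x h => h.1 rfl⟩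

/-- A split `(V1, X1; V2, X2)` of a graph. -/
def IsSplit {V : Type} (G : SimpleGraph V) (V1 X1 V2 X2 : Set V) : Prop :=
  V1 ∪ V2 = Set.univ ∧ Disjoint V1 V2 ∧ 2 ≤ V1.encard ∧ 2 ≤ V2.encard ∧
  X1 ⊆ V1 ∧ X2 ⊆ V2 ∧ ∀ x ∈ V1, ∀ y ∈ V2, (G.Adj x y ↔ x ∈ X1 ∧ y ∈ X2)

/-- A graph has a split. -/
def HasSplit {V : Type} (G : SimpleGraph V) : Prop :=
  ∃ V1 X1 V2 X2, IsSplit G V1 X1 V2 X2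

/-- Twin vertices: same neighbours outside `{u, v}`. -/
def IsTwinPair {V : Type} (G : SimpleGraph V) (u v : V) : Prop :=
  u ≠ v ∧ G.neighborSet u \ {v} = G.neighborSet v \ {u}

/-- Adjacent twins. -/
def AdjacentTwins {V : Type} (G : SimpleGraph V) (u v : V) : Prop :=
  G.Adj u v ∧ G.neighborSet u \ {v} = G.neighborSet v \ {u}

/-- Nonadjacent twins. -/
def NonadjacentTwins {V : Type} (G : SimpleGraph V) (u v : V) : Prop :=
  u ≠ v ∧ ¬ G.Adj u v ∧ G.neighborSet u = G.neighborSet v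

/-- Delete a vertex: keep the vertex set, remove all edges at `v`. -/
def deleteVertex {V : Type} (G : SimpleGraph V) (v : V) : SimpleGraph V where
  Adj x y := G.Adj x y ∧ x ≠ v ∧ y ≠ v
  symm := ⟨fun x y h => ⟨h.1.symm, h.2.2, h.2.1⟩⟩
  loopless := ⟨fun x h => G.ne_of_adj h.1 rfl⟩

/-- `v` is a cutpoint of the connected graph `G`. -/
def IsCutpoint {V : Type} (G : SimpleGraph V) (v : V) : Prop :=
  G.Connected ∧ ∃ x y : V, x ≠ v ∧ y ≠ v ∧ ¬ (deleteVertex G v).Reachable x y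

/-- Cyclic equivalence of words: generated by rotations and reversals. -/
inductive CyclicEquiv {β : Type} : List β → List β → Prop
  | refl (l : List β) : CyclicEquiv l l
  | rot (l₁ l₂ : List β) : CyclicEquiv (l₁ ++ l₂) (l₂ ++ l₁)
  | rev (l : List β) : CyclicEquiv l l.reverse
  | symm {l₁ l₂ : List β} : CyclicEquiv l₁ l₂ → CyclicEquiv l₂ l₁
  | trans {l₁ l₂ l₃ : List β} : CyclicEquiv l₁ l₂ → CyclicEquiv l₂ l₃ → CyclicEquiv l₁ l₃

/-- `G` is 3-connected: more than 3 vertices, and removing fewer than 3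
vertices leaves it connected. -/
def ThreeConnected {V : Type} [Fintype V] (G : SimpleGraph V) : Prop :=
  3 < Fintype.card V ∧ ∀ K : Set V, K.ncard < 3 → (G.induce (Kᶜ : Set V)).Connected

/-- The disjoint union of two graphs, joined by a single edge from `a` to `b`. -/
def joinedByEdge {V₁ V₂ : Type} (G₁ : SimpleGraph V₁) (G₂ : SimpleGraph V₂)
    (a : V₁) (b : V₂) : SimpleGraph (V₁ ⊕ V₂) where
  Adj x y :=
    Sum.elim (fun u => Sum.elim (fun w => G₁.Adj u w) (fun w => u = a ∧ w = b) y)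
             (fun u => Sum.elim (fun w => u = b ∧ w = a) (fun w => G₂.Adj u w) y) x
  symm := by
    refine ⟨?_⟩
    rintro (u | u) (w | w) h
    · exact h.symm
    · exact ⟨h.2, h.1⟩
    · exact ⟨h.2, h.1⟩
    · exact h.symm
  loopless := by
    refine ⟨?_⟩
    rintro (u | u) h
    · exact G₁.ne_of_adj h rfl
    · exact G₂.ne_of_adj h rfl

namespace SimpleGraph

variable {V : Type} [Fintype V] (G : SimpleGraph V) [DecidableRel G.Adj]

theorem exists_neighborSet_eq_triple_of_degree_eq_three [DecidableEq V] {x : V}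
    (hx : G.degree x = 3) :
    ∃ a b c : V, a ≠ b ∧ a ≠ c ∧ b ≠ c ∧ G.neighborSet x = {a, b, c} := by
  obtain ⟨a, b, c, hab, hac, hbc, habc⟩ := Finset.card_eq_three.mp hx
  refine ⟨a, b, c, hab, hac, hbc, ?_⟩
  rw [← coe_neighborFinset, habc]
  push_cast
  rfl

theorem neighborSet_eq_of_forall_adj_of_degree_le {x : V} {s : Finset V}
    (hadj : ∀ y ∈ s, G.Adj x y) (hdeg : G.degree x ≤ s.card) : G.neighborSet x = s := by
  have hsub : s ⊆ G.neighborFinset x := fun y hy => (G.mem_neighborFinset x y).mpr (hadj y hy)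
  rw [← coe_neighborFinset, Finset.eq_of_subset_of_card_le hsub hdeg]

end SimpleGraph

/-- In a cubic graph, two intersecting pairs of nonadjacent twins produce a
`K_{3,3}` which is an entire connected component. -/
theorem stmt10 {V : Type} [Fintype V] (G : SimpleGraph V) [DecidableRel G.Adj]
    (hcubic : ∀ x : V, G.degree x = 3) (u v w : V) (huw : u ≠ w)
    (h1 : NonadjacentTwins G u v) (h2 : NonadjacentTwins G v w) :
    ∃ a b c : V, a ≠ b ∧ a ≠ c ∧ b ≠ c ∧
      G.neighborSet u = {a, b, c} ∧ G.neighborSet v = {a, b, c} ∧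
      G.neighborSet w = {a, b, c} ∧
      G.neighborSet a = {u, v, w} ∧ G.neighborSet b = {u, v, w} ∧
      G.neighborSet c = {u, v, w} := by
  classical
  obtain ⟨huv, -, hNuv⟩ := h1
  obtain ⟨hvw, -, hNvw⟩ := h2
  obtain ⟨a, b, c, hab, hac, hbc, hNu⟩ :=
    G.exists_neighborSet_eq_triple_of_degree_eq_three (hcubic u)
  have hNv : G.neighborSet v = {a, b, c} := hNuv ▸ hNu
  have hNw : G.neighborSet w = {a, b, c} := hNvw ▸ hNv
  -- Each common neighbour is adjacent to the three distinct twins, which exhaust its degree.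
  have hN : ∀ x ∈ ({a, b, c} : Set V), G.neighborSet x = {u, v, w} := by
    intro x hx
    have hadj : ∀ y ∈ ({u, v, w} : Finset V), G.Adj x y := by
      simp only [Finset.mem_insert, Finset.mem_singleton]
      rintro y (rfl | rfl | rfl)
      · exact (G.mem_neighborSet _ _).mp (hNu ▸ hx) |>.symm
      · exact (G.mem_neighborSet _ _).mp (hNv ▸ hx) |>.symm
      · exact (G.mem_neighborSet _ _).mp (hNw ▸ hx) |>.symm
    have hdeg : G.degree x ≤ ({u, v, w} : Finset V).card := by
      rw [hcubic x, Finset.card_eq_three.mpr ⟨u, v, w, huv, huw, hvw, rfl⟩]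
    simpa using G.neighborSet_eq_of_forall_adj_of_degree_le hadj hdeg
  exact ⟨a, b, c, hab, hac, hbc, hNu, hNv, hNw,
    hN a (by simp), hN b (by simp), hN c (by simp)⟩
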